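/- arXiv:2411.19111 — 5 statements merged into one kernel-verified Lean document; each statement's English description precedes it below -/
import Mathlib

section
/- Let (F, ζ) : T → T' be a morphism of monads (T on C, T' on D) such that ζ : T'F ⇒ FT is a natural isomorphism, and suppose F has a right adjoint R with unit e : Id ⇒ RF and counit h : FR ⇒ Id. Define ξ : T ∘ R ⇒ R ∘ T' by ξ_Y = RT'(h_Y) ∘ R(ζ_{R(Y)}⁻¹) ∘ e_{TR(Y)}. Then: (a) (R, ξ) is a morphism of monads from T' to T, i.e. ξ_Y ∘ μ_{R(Y)} = R(μ'_Y) ∘ ξ_{T'(Y)} ∘ T(ξ_Y) and ξ_Y ∘ η_{R(Y)} = R(η'_Y); (b) the lifted functor R̃ : T'-Mod → T-Mod, (W, u) ↦ (R(W), R(u) ∘ ξ_W), is right adjoint to the lifted functor F̃_ζ : T-Mod → T'-Mod, (V, r) ↦ (F(V), F(r) ∘ ζ_V), with unit and counit given on underlying objects by e and h. -/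
/-!
`ξ` is the mate of `ζ⁻¹` under `F ⊣ R`, characterised by `F ξ_Y ≫ h_{T'Y} = ζ⁻¹_{RY} ≫ T' h_Y`.
Transposing along the adjunction, the monad-morphism equations for `ξ` become those for `ζ⁻¹`,
which follow from those for `ζ` because `ζ` is invertible. Any monad morphism `(G, φ)` lifts
`G` to algebras by `(V, r) ↦ (G V, φ_V ≫ G r)`; the unit and counit of `F ⊣ R` are algebra maps
between the lifted functors by the same two mate identities, and the triangle identities are
inherited from `F ⊣ R`.
-/

open CategoryTheory

namespace CategoryTheory

section MonadMorphism

variable {A B : Type*} [Category A] [Category B]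

structure IsMonadMorphism (S : Monad A) (S' : Monad B) (G : A ⥤ B)
    (φ : G ⋙ (S' : B ⥤ B) ⟶ (S : A ⥤ A) ⋙ G) : Prop where
  app_μ (X : A) : S'.μ.app (G.obj X) ≫ φ.app X
    = (S' : B ⥤ B).map (φ.app X) ≫ φ.app ((S : A ⥤ A).obj X) ≫ G.map (S.μ.app X)
  app_η (X : A) : S'.η.app (G.obj X) ≫ φ.app X = G.map (S.η.app X)

namespace IsMonadMorphism

variable {S : Monad A} {S' : Monad B} {G : A ⥤ B} {φ : G ⋙ (S' : B ⥤ B) ⟶ (S : A ⥤ A) ⋙ G}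

@[simps]
def liftAlgebra (h : IsMonadMorphism S S' G φ) : S.Algebra ⥤ S'.Algebra where
  obj M :=
    { A := G.obj M.A
      a := φ.app M.A ≫ G.map M.a
      unit := by rw [reassoc_of% (h.app_η M.A), ← G.map_comp, M.unit, G.map_id]
      assoc := by
        rw [reassoc_of% (h.app_μ M.A), ← G.map_comp, M.assoc, G.map_comp,
          ← reassoc_of% (φ.naturality M.a)]
        simp }
  map f :=
    { f := G.map f.f
      h := by
        dsimp only
        rw [Category.assoc, ← G.map_comp, ← f.h, G.map_comp,
          ← reassoc_of% (φ.naturality f.f)] }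

end IsMonadMorphism

section

variable {S : Monad A} {S' : Monad B} {G : A ⥤ B} {φ : G ⋙ (S' : B ⥤ B) ≅ (S : A ⥤ A) ⋙ G}

theorem IsMonadMorphism.map_μ_comp_inv_app (h : IsMonadMorphism S S' G φ.hom) (X : A) :
    G.map (S.μ.app X) ≫ φ.inv.app X
      = φ.inv.app ((S : A ⥤ A).obj X) ≫ (S' : B ⥤ B).map (φ.inv.app X) ≫ S'.μ.app (G.obj X) := by
  rw [← cancel_mono (φ.hom.app X)]
  simp [h.app_μ X, ← Functor.map_comp_assoc]

theorem IsMonadMorphism.map_η_comp_inv_app (h : IsMonadMorphism S S' G φ.hom) (X : A) :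
    G.map (S.η.app X) ≫ φ.inv.app X = S'.η.app (G.obj X) := by
  rw [← h.app_η, Category.assoc, Iso.hom_inv_id_app]
  exact Category.comp_id _

end

end MonadMorphism

section Adjunction

variable {C D : Type*} [Category C] [Category D] {T : Monad C} {T' : Monad D}
  {F : C ⥤ D} {R : D ⥤ C} {ζ : F ⋙ (T' : D ⥤ D) ≅ (T : C ⥤ C) ⋙ F} (adj : F ⊣ R)

variable (ζ) in
abbrev mateInv : R ⋙ (T : C ⥤ C) ⟶ (T' : D ⥤ D) ⋙ R :=
  (mateEquiv adj adj (.mk _ _ _ _ ζ.inv)).natTrans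

theorem mateInv_app (Y : D) : (mateInv ζ adj).app Y = adj.unit.app ((T : C ⥤ C).obj (R.obj Y))
    ≫ R.map (ζ.inv.app (R.obj Y)) ≫ R.map ((T' : D ⥤ D).map (adj.counit.app Y)) := by
  simp

theorem mateInv_counit (Y : D) : F.map ((mateInv ζ adj).app Y) ≫ adj.counit.app _
    = ζ.inv.app (R.obj Y) ≫ (T' : D ⥤ D).map (adj.counit.app Y) :=
  mateEquiv_counit _ _ _ _

theorem unit_mateInv (X : C) : (T : C ⥤ C).map (adj.unit.app X) ≫ (mateInv ζ adj).app (F.obj X)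
    = adj.unit.app _ ≫ R.map (ζ.inv.app X) :=
  unit_mateEquiv _ _ _ _

theorem IsMonadMorphism.mate (h : IsMonadMorphism T T' F ζ.hom) :
    IsMonadMorphism T' T R (mateInv ζ adj) where
  app_μ Y := by
    apply (adj.homEquiv _ _).symm.injective
    simp only [Adjunction.homEquiv_counit, F.map_comp, Category.assoc, adj.counit_naturality]
    rw [mateInv_counit, reassoc_of% (mateInv_counit adj ((T' : D ⥤ D).obj Y)),
      reassoc_of% (h.map_μ_comp_inv_app (R.obj Y))]
    have hζ := ζ.inv.naturality ((mateInv ζ adj).app Y)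
    dsimp only [Functor.comp_map] at hζ
    rw [reassoc_of% hζ, ← Functor.map_comp_assoc, mateInv_counit, Functor.map_comp_assoc]
    exact congrArg (fun f => _ ≫ _ ≫ f) (T'.μ.naturality (adj.counit.app Y)).symm
  app_η Y := by
    apply (adj.homEquiv _ _).symm.injective
    simp only [Adjunction.homEquiv_counit, F.map_comp, Category.assoc, adj.counit_naturality]
    rw [mateInv_counit, reassoc_of% (h.map_η_comp_inv_app (R.obj Y))]
    exact (T'.η.naturality _).symm

theorem unit_comp_mateInv_comp_map_hom (X : C) :
    (T : C ⥤ C).map (adj.unit.app X) ≫ (mateInv ζ adj).app (F.obj X) ≫ R.map (ζ.hom.app X)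
      = adj.unit.app ((T : C ⥤ C).obj X) := by
  rw [reassoc_of% (unit_mateInv adj X), ← R.map_comp, Iso.inv_hom_id_app]
  simp

def IsMonadMorphism.liftAdjunction (h : IsMonadMorphism T T' F ζ.hom) :
    h.liftAlgebra ⊣ (h.mate adj).liftAlgebra where
  unit :=
    { app M :=
        { f := adj.unit.app M.A
          h := by
            dsimp only [IsMonadMorphism.liftAlgebra, Functor.comp_obj, Functor.id_obj]
            rw [R.map_comp, reassoc_of% (unit_comp_mateInv_comp_map_hom adj M.A)]
            exact (adj.unit.naturality M.a).symm }
      naturality _ _ f := by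
        ext
        exact adj.unit.naturality f.f }
  counit :=
    { app W :=
        { f := adj.counit.app W.A
          h := by
            dsimp only [IsMonadMorphism.liftAlgebra, Functor.comp_obj, Functor.id_obj]
            rw [F.map_comp, Category.assoc, Category.assoc, adj.counit_naturality,
              reassoc_of% (mateInv_counit adj W.A), Iso.hom_inv_id_app_assoc] }
      naturality _ _ g := by
        ext
        exact adj.counit.naturality g.f }
  left_triangle_components M := by
    ext
    exact adj.left_triangle_components M.A
  right_triangle_components W := by
    ext
    exact adj.right_triangle_components W.A

end Adjunction

end CategoryTheory

/-- Adjoint lifting theorem along monads (Johnstone): if `(F, ζ) : 𝕋 → 𝕋'` is a strong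
morphism of monads (`ζ` an isomorphism) and `F` has a right adjoint `R`, then
`ξ_Y = RT'(h_Y) ∘ R(ζ⁻¹_{R Y}) ∘ e_{TR(Y)}` makes `(R, ξ)` a morphism of monads
`𝕋' → 𝕋`, and the lifted functor `R̃ : 𝕋'-Mod → 𝕋-Mod` is right adjoint to the lifted
functor `F̃_ζ : 𝕋-Mod → 𝕋'-Mod`, with unit and counit given on underlying objects by
those of `F ⊣ R`. -/
theorem stmt_6 {C D : Type*} [Category C] [Category D]
    (T : Monad C) (T' : Monad D) (F : C ⥤ D)
    (ζ : F ⋙ (T' : D ⥤ D) ≅ (T : C ⥤ C) ⋙ F)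
    (hζμ : ∀ X : C, T'.μ.app (F.obj X) ≫ ζ.hom.app X
      = (T' : D ⥤ D).map (ζ.hom.app X) ≫ ζ.hom.app ((T : C ⥤ C).obj X) ≫ F.map (T.μ.app X))
    (hζη : ∀ X : C, T'.η.app (F.obj X) ≫ ζ.hom.app X = F.map (T.η.app X))
    (R : D ⥤ C) (adjFR : F ⊣ R)
    (ξ : ∀ Y : D, (T : C ⥤ C).obj (R.obj Y) ⟶ R.obj ((T' : D ⥤ D).obj Y))
    (hξ : ∀ Y : D, ξ Y
      = adjFR.unit.app ((T : C ⥤ C).obj (R.obj Y))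
        ≫ R.map (ζ.inv.app (R.obj Y))
        ≫ R.map ((T' : D ⥤ D).map (adjFR.counit.app Y))) :
    (∀ Y : D, T.μ.app (R.obj Y) ≫ ξ Y
        = (T : C ⥤ C).map (ξ Y) ≫ ξ ((T' : D ⥤ D).obj Y) ≫ R.map (T'.μ.app Y))
    ∧ (∀ Y : D, T.η.app (R.obj Y) ≫ ξ Y = R.map (T'.η.app Y))
    ∧ ∃ (Ft : T.Algebra ⥤ T'.Algebra) (Rt : T'.Algebra ⥤ T.Algebra),
        (∀ M : T.Algebra, (Ft.obj M).A = F.obj M.A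
          ∧ HEq (Ft.obj M).a (ζ.hom.app M.A ≫ F.map M.a))
        ∧ (∀ (M N : T.Algebra) (f : M ⟶ N), HEq (Ft.map f).f (F.map f.f))
        ∧ (∀ W : T'.Algebra, (Rt.obj W).A = R.obj W.A
            ∧ HEq (Rt.obj W).a (ξ W.A ≫ R.map W.a))
        ∧ (∀ (W W' : T'.Algebra) (g : W ⟶ W'), HEq (Rt.map g).f (R.map g.f))
        ∧ ∃ adj2 : Ft ⊣ Rt,
            (∀ M : T.Algebra, HEq (adj2.unit.app M).f (adjFR.unit.app M.A))
            ∧ (∀ W : T'.Algebra, HEq (adj2.counit.app W).f (adjFR.counit.app W.A)) := by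
  have hζ : IsMonadMorphism T T' F ζ.hom := ⟨hζμ, hζη⟩
  obtain rfl : ξ = fun Y => (mateInv ζ adjFR).app Y :=
    funext fun Y => (hξ Y).trans (mateInv_app adjFR Y).symm
  exact ⟨(hζ.mate adjFR).app_μ, (hζ.mate adjFR).app_η, hζ.liftAlgebra,
    (hζ.mate adjFR).liftAlgebra, fun _ => ⟨rfl, HEq.rfl⟩, fun _ _ _ => HEq.rfl,
    fun _ => ⟨rfl, HEq.rfl⟩, fun _ _ _ => HEq.rfl, hζ.liftAdjunction adjFR,
    fun _ => HEq.rfl, fun _ => HEq.rfl⟩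
end

section
/- Let (G, Φ, α) be a strong morphism of resolvent pairs: F ⊣ U between A and B, F' ⊣ U' between A' and B', functors G : B → B', Φ : A → A' with natural isomorphism α : GU ≅ U'Φ, such that the comparison β^α : F'G ⇒ ΦF (defined by β^α_X = ε'_{ΦF(X)} ∘ F'(α_{F(X)}) ∘ F'G(η_X)) is a natural isomorphism. If P in A is a retract (direct summand) of FU(V) for some V in A, then Φ(P) is a retract of F'U'(Φ(V)). -/
open CategoryTheory Limits

/-- A strong morphism `(G, Φ, α)` of resolvent pairs sends relatively projective objects to
relatively projective objects: if `P` is a retract of `FU(V)`, then `Φ(P)` is a retract of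
`F'U'(Φ(V))`. -/
theorem stmt_7 {A B A' B' : Type*} [Category A] [Category B] [Category A'] [Category B']
    [Abelian A] [Abelian B] [Abelian A'] [Abelian B']
    (F : B ⥤ A) (U : A ⥤ B) (adj : F ⊣ U)
    [U.Additive] [U.Faithful] [PreservesFiniteLimits U] [PreservesFiniteColimits U]
    (F' : B' ⥤ A') (U' : A' ⥤ B') (adj' : F' ⊣ U')
    [U'.Additive] [U'.Faithful] [PreservesFiniteLimits U'] [PreservesFiniteColimits U']
    (G : B ⥤ B') (Φ : A ⥤ A') [Φ.Additive]
    (α : U ⋙ G ≅ Φ ⋙ U')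
    (hstrong : ∀ X : B, IsIso (F'.map (G.map (adj.unit.app X))
      ≫ F'.map (α.hom.app (F.obj X)) ≫ adj'.counit.app (Φ.obj (F.obj X))))
    (V P : A) (i : P ⟶ F.obj (U.obj V)) (r : F.obj (U.obj V) ⟶ P) (hir : i ≫ r = 𝟙 P) :
    ∃ (i' : Φ.obj P ⟶ F'.obj (U'.obj (Φ.obj V))) (r' : F'.obj (U'.obj (Φ.obj V)) ⟶ Φ.obj P),
      i' ≫ r' = 𝟙 (Φ.obj P) := by
  set β : F'.obj (G.obj (U.obj V)) ⟶ Φ.obj (F.obj (U.obj V)) :=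
    F'.map (G.map (adj.unit.app (U.obj V)))
      ≫ F'.map (α.hom.app (F.obj (U.obj V))) ≫ adj'.counit.app (Φ.obj (F.obj (U.obj V)))
    with hβ
  have hβiso : IsIso β := hstrong (U.obj V)
  set e : F'.obj (U'.obj (Φ.obj V)) ⟶ Φ.obj (F.obj (U.obj V)) :=
    F'.map (α.inv.app V) ≫ β with he
  have : IsIso e := by
    have : IsIso (F'.map (α.inv.app V)) := inferInstance
    exact IsIso.comp_isIso
  refine ⟨Φ.map i ≫ inv e, e ≫ Φ.map r, ?_⟩
  rw [Category.assoc, ← Category.assoc (inv e), IsIso.inv_hom_id, Category.id_comp,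
    ← Φ.map_comp, hir, Φ.map_id]
end

section
/- Let C be a strict monoidal category and let φ be a monoidal structure on the tensor product functor ⊗ : C × C → C, i.e. a natural isomorphism with components φ_{(X₁,Y₁),(X₂,Y₂)} : X₁⊗Y₁⊗X₂⊗Y₂ → X₁⊗X₂⊗Y₁⊗Y₂ satisfying the associativity constraint φ_{(X₁⊗X₂,Y₁⊗Y₂),(X₃,Y₃)} ∘ (φ_{(X₁,Y₁),(X₂,Y₂)} ⊗ id) = φ_{(X₁,Y₁),(X₂⊗X₃,Y₂⊗Y₃)} ∘ (id ⊗ φ_{(X₂,Y₂),(X₃,Y₃)}) and the normalization φ_{(1,1),(X,Y)} = φ_{(X,Y),(1,1)} = id. Define B(φ)_{X,Y} : X⊗Y → Y⊗X as the composite φ⁻¹_{(Y,1),(1,X)} ∘ φ_{(1,X),(Y,1)}. Then B(φ) is a braiding on C: it is a natural isomorphism satisfying both hexagon identities B(φ)_{X⊗Y,Z} = (B(φ)_{X,Z} ⊗ id_Y) ∘ (id_X ⊗ B(φ)_{Y,Z}) and B(φ)_{X,Y⊗Z} = (id_Y ⊗ B(φ)_{X,Z}) ∘ (B(φ)_{X,Y}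 ⊗ id_Z). -/
/-!
Write `c_{X,Y} = φ_{(1,X),(Y,1)}`, `d_{X,Y} = φ_{(X,1),(1,Y)}`, `u_{X,Y} = φ_{(X,1),(Y,1)}` and
`v_{X,Y} = φ_{(1,X),(1,Y)}` (`phiInner`, `phiOuter`, `phiFst`, `phiSnd`), so that
`B_{X,Y} = d_{Y,X}⁻¹ ∘ c_{X,Y}`; naturality of `B` is that of `φ`. For the first hexagon, the
cocycle condition at the index triples `(1,X;1,Y;Z,1)`, `(1,X;Z,1;1,Y)` and `(Z,1;1,X;1,Y)`
successively rewrites `c_{X⊗Y,Z}`, `φ_{(1,X),(Z,Y)}` and `φ_{(Z,X),(1,Y)}`; the result is that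
`B_{X⊗Y,Z}` is the hexagon composite conjugated by `v_{X,Y} ⊗ id_Z` and `id_Z ⊗ v_{X,Y}`, and
naturality of `B` along `v_{X,Y}` removes the conjugation. The second hexagon is the same
argument with the triples `(1,X;Y,1;Z,1)`, `(Y,1;1,X;Z,1)`, `(Y,1;Z,1;1,X)` and with `u_{Y,Z}`
in place of `v_{X,Y}`.
-/

open CategoryTheory MonoidalCategory

namespace JoyalStreet

variable {C : Type*} [Category C]

theorem eq_of_comm_of_eq_conj {P Q : C} (e : P ≅ P) (e' : Q ≅ Q) {b h : P ⟶ Q}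
    (hcomm : e.hom ≫ b = b ≫ e'.hom) (hb : b = e.inv ≫ h ≫ e'.hom) : b = h := by
  rw [← cancel_mono e'.hom, ← hcomm, hb, Iso.hom_inv_id_assoc]

variable [MonoidalCategory C]

theorem eqToHom_comp_comp_eqToHom_tensorHom {A B A' B' P Q R S : C} (f : A ⟶ B) (g : A' ⟶ B')
    (hP : P = A) (hQ : B = Q) (hR : R = A') (hS : B' = S) :
    ((eqToHom hP ≫ f ≫ eqToHom hQ) ⊗ₘ (eqToHom hR ≫ g ≫ eqToHom hS))
      = eqToHom (by rw [hP, hR]) ≫ (f ⊗ₘ g) ≫ eqToHom (by rw [hQ, hS]) := by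
  subst hP hQ hR hS
  simp

theorem id_whiskerLeft_eq_eqToHom (hul : ∀ X : C, 𝟙_ C ⊗ X = X)
    (hlu : ∀ X : C, (λ_ X).hom = eqToHom (hul X)) {X Y : C} (f : X ⟶ Y) :
    𝟙_ C ◁ f = eqToHom (hul X) ≫ f ≫ eqToHom (hul Y).symm := by
  simp [id_whiskerLeft, fun X => (Iso.ext (hlu X) : λ_ X = eqToIso (hul X))]

theorem whiskerRight_id_eq_eqToHom (hur : ∀ X : C, X ⊗ 𝟙_ C = X)
    (hru : ∀ X : C, (ρ_ X).hom = eqToHom (hur X)) {X Y : C} (f : X ⟶ Y) :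
    f ▷ 𝟙_ C = eqToHom (hur X) ≫ f ≫ eqToHom (hur Y).symm := by
  simp [whiskerRight_id, fun X => (Iso.ext (hru X) : ρ_ X = eqToIso (hur X))]

def phiAlong (φ : ∀ X₁ Y₁ X₂ Y₂ : C, (X₁ ⊗ Y₁) ⊗ (X₂ ⊗ Y₂) ≅ (X₁ ⊗ X₂) ⊗ (Y₁ ⊗ Y₂))
    (X₁ Y₁ X₂ Y₂ : C) {S T : C} (hS : S = (X₁ ⊗ Y₁) ⊗ (X₂ ⊗ Y₂))
    (hT : (X₁ ⊗ X₂) ⊗ (Y₁ ⊗ Y₂) = T) : S ≅ T :=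
  eqToIso hS ≪≫ φ X₁ Y₁ X₂ Y₂ ≪≫ eqToIso hT

def IsNatural (φ : ∀ X₁ Y₁ X₂ Y₂ : C, (X₁ ⊗ Y₁) ⊗ (X₂ ⊗ Y₂) ≅ (X₁ ⊗ X₂) ⊗ (Y₁ ⊗ Y₂)) :
    Prop :=
  ∀ {X₁ Y₁ X₂ Y₂ X₁' Y₁' X₂' Y₂' : C}
    (f₁ : X₁ ⟶ X₁') (g₁ : Y₁ ⟶ Y₁') (f₂ : X₂ ⟶ X₂') (g₂ : Y₂ ⟶ Y₂'),
    ((f₁ ⊗ₘ g₁) ⊗ₘ (f₂ ⊗ₘ g₂)) ≫ (φ X₁' Y₁' X₂' Y₂').hom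
      = (φ X₁ Y₁ X₂ Y₂).hom ≫ ((f₁ ⊗ₘ f₂) ⊗ₘ (g₁ ⊗ₘ g₂))

def IsCocycle (hassoc : ∀ X Y Z : C, (X ⊗ Y) ⊗ Z = X ⊗ (Y ⊗ Z))
    (φ : ∀ X₁ Y₁ X₂ Y₂ : C, (X₁ ⊗ Y₁) ⊗ (X₂ ⊗ Y₂) ≅ (X₁ ⊗ X₂) ⊗ (Y₁ ⊗ Y₂)) : Prop :=
  ∀ X₁ Y₁ X₂ Y₂ X₃ Y₃ : C,
    ((φ X₁ Y₁ X₂ Y₂).hom ⊗ₘ 𝟙 (X₃ ⊗ Y₃)) ≫ (φ (X₁ ⊗ X₂) (Y₁ ⊗ Y₂) X₃ Y₃).hom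
      = eqToHom (hassoc (X₁ ⊗ Y₁) (X₂ ⊗ Y₂) (X₃ ⊗ Y₃))
        ≫ (𝟙 (X₁ ⊗ Y₁) ⊗ₘ (φ X₂ Y₂ X₃ Y₃).hom)
        ≫ (φ X₁ Y₁ (X₂ ⊗ X₃) (Y₂ ⊗ Y₃)).hom
        ≫ eqToHom (by simp only [hassoc])

section Cocycle

variable {hassoc : ∀ X Y Z : C, (X ⊗ Y) ⊗ Z = X ⊗ (Y ⊗ Z)}
  {φ : ∀ X₁ Y₁ X₂ Y₂ : C, (X₁ ⊗ Y₁) ⊗ (X₂ ⊗ Y₂) ≅ (X₁ ⊗ X₂) ⊗ (Y₁ ⊗ Y₂)}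
  (hcoc : IsCocycle hassoc φ)
  {X₁ Y₁ X₂ Y₂ X₃ Y₃ X₁₂ Y₁₂ X₂₃ Y₂₃ A B U P V W : C}
  (hA : A = X₁ ⊗ Y₁) (hB : B = X₂ ⊗ Y₂) (hU : U = X₃ ⊗ Y₃)
  (hX₁₂ : X₁₂ = X₁ ⊗ X₂) (hY₁₂ : Y₁₂ = Y₁ ⊗ Y₂) (hX₂₃ : X₂₃ = X₂ ⊗ X₃) (hY₂₃ : Y₂₃ = Y₂ ⊗ Y₃)
  (hP : X₁₂ ⊗ Y₁₂ = P) (hV : X₂₃ ⊗ Y₂₃ = V) (hW : (X₁ ⊗ X₂₃) ⊗ (Y₁ ⊗ Y₂₃) = W)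
include hcoc hA hB hU hX₁₂ hY₁₂ hX₂₃ hY₂₃ hP hV hW

-- Stated between arbitrary objects equal to the tensor products involved, so that the instances
-- with unit indices apply without further transport; as these objects are variables, the
-- equalities can simply be substituted away.
theorem phiAlong_cocycle :
    (phiAlong φ X₁ Y₁ X₂ Y₂ (S := A ⊗ B) (T := P) (by rw [hA, hB])
        (by rw [← hP, hX₁₂, hY₁₂])).hom ▷ U
        ≫ (phiAlong φ X₁₂ Y₁₂ X₃ Y₃ (S := P ⊗ U) (T := W) (by rw [← hP, hU])
            (by rw [← hW, hX₁₂, hY₁₂, hX₂₃, hY₂₃]; simp only [hassoc])).hom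
      = eqToHom (hassoc A B U)
        ≫ A ◁ (phiAlong φ X₂ Y₂ X₃ Y₃ (S := B ⊗ U) (T := V) (by rw [hB, hU])
            (by rw [← hV, hX₂₃, hY₂₃])).hom
        ≫ (phiAlong φ X₁ Y₁ X₂₃ Y₂₃ (S := A ⊗ V) (T := W) (by rw [hA, ← hV]) hW).hom := by
  subst hP hV hW hA hB hU hX₁₂ hY₁₂ hX₂₃ hY₂₃
  simp only [phiAlong, Iso.trans_hom, eqToIso.hom, eqToHom_refl, Category.id_comp,
    Category.comp_id, ← tensorHom_id, ← id_tensorHom]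
  rw [reassoc_of% (hcoc X₁ Y₁ X₂ Y₂ X₃ Y₃)]
  simp

theorem phiAlong_cocycle_left :
    (phiAlong φ X₁₂ Y₁₂ X₃ Y₃ (S := P ⊗ U) (T := W) (by rw [← hP, hU])
        (by rw [← hW, hX₁₂, hY₁₂, hX₂₃, hY₂₃]; simp only [hassoc])).hom
      = (phiAlong φ X₁ Y₁ X₂ Y₂ (S := A ⊗ B) (T := P) (by rw [hA, hB])
          (by rw [← hP, hX₁₂, hY₁₂])).inv ▷ U
        ≫ eqToHom (hassoc A B U)
        ≫ A ◁ (phiAlong φ X₂ Y₂ X₃ Y₃ (S := B ⊗ U) (T := V) (by rw [hB, hU])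
            (by rw [← hV, hX₂₃, hY₂₃])).hom
        ≫ (phiAlong φ X₁ Y₁ X₂₃ Y₂₃ (S := A ⊗ V) (T := W) (by rw [hA, ← hV]) hW).hom :=
  (Iso.eq_inv_comp (whiskerRightIso _ U)).2
    (phiAlong_cocycle hcoc hA hB hU hX₁₂ hY₁₂ hX₂₃ hY₂₃ hP hV hW)

theorem phiAlong_cocycle_right :
    (phiAlong φ X₁ Y₁ X₂₃ Y₂₃ (S := A ⊗ V) (T := W) (by rw [hA, ← hV]) hW).hom
      = A ◁ (phiAlong φ X₂ Y₂ X₃ Y₃ (S := B ⊗ U) (T := V) (by rw [hB, hU])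
            (by rw [← hV, hX₂₃, hY₂₃])).inv
        ≫ eqToHom (hassoc A B U).symm
        ≫ (phiAlong φ X₁ Y₁ X₂ Y₂ (S := A ⊗ B) (T := P) (by rw [hA, hB])
          (by rw [← hP, hX₁₂, hY₁₂])).hom ▷ U
        ≫ (phiAlong φ X₁₂ Y₁₂ X₃ Y₃ (S := P ⊗ U) (T := W) (by rw [← hP, hU])
            (by rw [← hW, hX₁₂, hY₁₂, hX₂₃, hY₂₃]; simp only [hassoc])).hom := by
  rw [phiAlong_cocycle hcoc hA hB hU hX₁₂ hY₁₂ hX₂₃ hY₂₃ hP hV hW]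
  simp

end Cocycle

section Braiding

variable (hul : ∀ X : C, 𝟙_ C ⊗ X = X) (hur : ∀ X : C, X ⊗ 𝟙_ C = X)
  (φ : ∀ X₁ Y₁ X₂ Y₂ : C, (X₁ ⊗ Y₁) ⊗ (X₂ ⊗ Y₂) ≅ (X₁ ⊗ X₂) ⊗ (Y₁ ⊗ Y₂))

def phiInner (X Y : C) : X ⊗ Y ≅ Y ⊗ X :=
  phiAlong φ (𝟙_ C) X Y (𝟙_ C) (by rw [hul, hur]) (by rw [hul, hur])

def phiOuter (X Y : C) : X ⊗ Y ≅ X ⊗ Y :=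
  phiAlong φ X (𝟙_ C) (𝟙_ C) Y (by rw [hul, hur]) (by rw [hul, hur])

def phiFst (X Y : C) : X ⊗ Y ≅ X ⊗ Y :=
  phiAlong φ X (𝟙_ C) Y (𝟙_ C) (by rw [hur, hur]) (by rw [hur, hur])

def phiSnd (X Y : C) : X ⊗ Y ≅ X ⊗ Y :=
  phiAlong φ (𝟙_ C) X (𝟙_ C) Y (by rw [hul, hul]) (by rw [hul, hul])

def braiding (X Y : C) : X ⊗ Y ⟶ Y ⊗ X :=
  (phiInner hul hur φ X Y).hom ≫ (phiOuter hul hur φ Y X).inv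

instance (X Y : C) : IsIso (braiding hul hur φ X Y) := by
  unfold braiding
  infer_instance

variable {φ} (hnat : IsNatural φ) (hlu : ∀ X : C, (λ_ X).hom = eqToHom (hul X))
  (hru : ∀ X : C, (ρ_ X).hom = eqToHom (hur X))
include hnat hlu hru

theorem phiInner_naturality {X Y X' Y' : C} (f : X ⟶ X') (g : Y ⟶ Y') :
    (f ⊗ₘ g) ≫ (phiInner hul hur φ X' Y').hom = (phiInner hul hur φ X Y).hom ≫ (g ⊗ₘ f) := by
  have h := hnat (𝟙 (𝟙_ C)) f g (𝟙 (𝟙_ C))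
  simp only [id_tensorHom, tensorHom_id, id_whiskerLeft_eq_eqToHom hul hlu,
    whiskerRight_id_eq_eqToHom hur hru, eqToHom_comp_comp_eqToHom_tensorHom] at h
  rw [← cancel_epi (eqToHom (show (𝟙_ C ⊗ X) ⊗ (Y ⊗ 𝟙_ C) = X ⊗ Y by rw [hul, hur])),
    ← cancel_mono (eqToHom (show Y' ⊗ X' = (𝟙_ C ⊗ Y') ⊗ (X' ⊗ 𝟙_ C) by rw [hul, hur]))]
  simpa [phiInner, phiAlong] using h

theorem phiOuter_naturality {X Y X' Y' : C} (f : X ⟶ X') (g : Y ⟶ Y') :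
    (f ⊗ₘ g) ≫ (phiOuter hul hur φ X' Y').hom = (phiOuter hul hur φ X Y).hom ≫ (f ⊗ₘ g) := by
  have h := hnat f (𝟙 (𝟙_ C)) (𝟙 (𝟙_ C)) g
  simp only [id_tensorHom, tensorHom_id, id_whiskerLeft_eq_eqToHom hul hlu,
    whiskerRight_id_eq_eqToHom hur hru, eqToHom_comp_comp_eqToHom_tensorHom] at h
  rw [← cancel_epi (eqToHom (show (X ⊗ 𝟙_ C) ⊗ (𝟙_ C ⊗ Y) = X ⊗ Y by rw [hul, hur])),
    ← cancel_mono (eqToHom (show X' ⊗ Y' = (X' ⊗ 𝟙_ C) ⊗ (𝟙_ C ⊗ Y') by rw [hul, hur]))]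
  simpa [phiOuter, phiAlong] using h

theorem braiding_naturality {X Y X' Y' : C} (f : X ⟶ X') (g : Y ⟶ Y') :
    (f ⊗ₘ g) ≫ braiding hul hur φ X' Y' = braiding hul hur φ X Y ≫ (g ⊗ₘ f) := by
  rw [braiding, braiding, reassoc_of% (phiInner_naturality hul hur hnat hlu hru f g),
    Category.assoc, cancel_epi, Iso.comp_inv_eq, Category.assoc, Iso.eq_inv_comp,
    phiOuter_naturality hul hur hnat hlu hru g f]

variable (hassoc : ∀ X Y Z : C, (X ⊗ Y) ⊗ Z = X ⊗ (Y ⊗ Z)) (hcoc : IsCocycle hassoc φ)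
include hcoc

theorem braiding_tensor_left (X Y Z : C) :
    braiding hul hur φ (X ⊗ Y) Z
      = eqToHom (hassoc X Y Z) ≫ X ◁ braiding hul hur φ Y Z ≫ eqToHom (hassoc X Z Y).symm
        ≫ braiding hul hur φ X Z ▷ Y ≫ eqToHom (hassoc Z X Y) := by
  let p := phiAlong φ (𝟙_ C) X Z Y (S := X ⊗ (Z ⊗ Y)) (T := Z ⊗ (X ⊗ Y))
    (by rw [hul]) (by rw [hul])
  let q := phiAlong φ Z X (𝟙_ C) Y (S := (Z ⊗ X) ⊗ Y) (T := Z ⊗ (X ⊗ Y))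
    (by rw [hul]) (by rw [hur])
  have hc : (phiInner hul hur φ (X ⊗ Y) Z).hom = (phiSnd hul φ X Y).inv ▷ Z
      ≫ eqToHom (hassoc X Y Z) ≫ X ◁ (phiInner hul hur φ Y Z).hom ≫ p.hom := by
    apply phiAlong_cocycle_left hcoc <;> simp only [hul, hur]
  have hp : p.hom = X ◁ (phiOuter hul hur φ Z Y).inv ≫ eqToHom (hassoc X Z Y).symm
      ≫ (phiInner hul hur φ X Z).hom ▷ Y ≫ q.hom := by
    apply phiAlong_cocycle_right hcoc <;> simp only [hul, hur]
  have hq : q.hom = (phiOuter hul hur φ Z X).inv ▷ Y ≫ eqToHom (hassoc Z X Y)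
      ≫ Z ◁ (phiSnd hul φ X Y).hom ≫ (phiOuter hul hur φ Z (X ⊗ Y)).hom := by
    apply phiAlong_cocycle_left hcoc <;> simp only [hul, hur]
  refine eq_of_comm_of_eq_conj (whiskerRightIso (phiSnd hul φ X Y) Z)
    (whiskerLeftIso Z (phiSnd hul φ X Y)) ?_ ?_
  · simpa using braiding_naturality hul hur hnat hlu hru (phiSnd hul φ X Y).hom (𝟙 Z)
  · simp [braiding, hc, hp, hq]

theorem braiding_tensor_right (X Y Z : C) :
    braiding hul hur φ X (Y ⊗ Z)
      = eqToHom (hassoc X Y Z).symm ≫ braiding hul hur φ X Y ▷ Z ≫ eqToHom (hassoc Y X Z)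
        ≫ Y ◁ braiding hul hur φ X Z ≫ eqToHom (hassoc Y Z X).symm := by
  let r := phiAlong φ Y X Z (𝟙_ C) (S := (Y ⊗ X) ⊗ Z) (T := (Y ⊗ Z) ⊗ X)
    (by rw [hur]) (by rw [hur])
  let s := phiAlong φ Y (𝟙_ C) Z X (S := Y ⊗ (Z ⊗ X)) (T := (Y ⊗ Z) ⊗ X)
    (by rw [hur]) (by rw [hul])
  have hc : (phiInner hul hur φ X (Y ⊗ Z)).hom = X ◁ (phiFst hur φ Y Z).inv
      ≫ eqToHom (hassoc X Y Z).symm ≫ (phiInner hul hur φ X Y).hom ▷ Z ≫ r.hom := by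
    apply phiAlong_cocycle_right hcoc <;> simp only [hul, hur]
  have hr : r.hom = (phiOuter hul hur φ Y X).inv ▷ Z ≫ eqToHom (hassoc Y X Z)
      ≫ Y ◁ (phiInner hul hur φ X Z).hom ≫ s.hom := by
    apply phiAlong_cocycle_left hcoc <;> simp only [hul, hur]
  have hs : s.hom = Y ◁ (phiOuter hul hur φ Z X).inv ≫ eqToHom (hassoc Y Z X).symm
      ≫ (phiFst hur φ Y Z).hom ▷ X ≫ (phiOuter hul hur φ (Y ⊗ Z) X).hom := by
    apply phiAlong_cocycle_right hcoc <;> simp only [hul, hur]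
  refine eq_of_comm_of_eq_conj (whiskerLeftIso X (phiFst hur φ Y Z))
    (whiskerRightIso (phiFst hur φ Y Z) X) ?_ ?_
  · simpa using braiding_naturality hul hur hnat hlu hru (𝟙 X) (phiFst hur φ Y Z).hom
  · simp [braiding, hc, hr, hs]

end Braiding

end JoyalStreet

/-- Joyal–Street: on a strict monoidal category `C` (strictness being expressed by the
hypotheses that the coherence isomorphisms are identities along equalities of objects),
any (normalized) monoidal structure `φ` on the tensor product functor `⊗ : C × C → C`
gives rise to a braiding `B(φ)_{X,Y} = φ⁻¹_{(Y,1),(1,X)} ∘ φ_{(1,X),(Y,1)}` on `C`: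
it is a natural isomorphism satisfying both hexagon identities. -/
theorem stmt_13 {C : Type*} [Category C] [MonoidalCategory C]
    -- strictness of the monoidal category:
    (hassoc : ∀ X Y Z : C, (X ⊗ Y) ⊗ Z = X ⊗ (Y ⊗ Z))
    (hul : ∀ X : C, 𝟙_ C ⊗ X = X)
    (hur : ∀ X : C, X ⊗ 𝟙_ C = X)
    (hlu : ∀ X : C, (λ_ X).hom = eqToHom (hul X))
    (hru : ∀ X : C, (ρ_ X).hom = eqToHom (hur X))
    -- a monoidal structure `φ` on the tensor product functor:
    (φ : ∀ X₁ Y₁ X₂ Y₂ : C, (X₁ ⊗ Y₁) ⊗ (X₂ ⊗ Y₂) ≅ (X₁ ⊗ X₂) ⊗ (Y₁ ⊗ Y₂))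
    (hnat : ∀ {X₁ Y₁ X₂ Y₂ X₁' Y₁' X₂' Y₂' : C}
      (f₁ : X₁ ⟶ X₁') (g₁ : Y₁ ⟶ Y₁') (f₂ : X₂ ⟶ X₂') (g₂ : Y₂ ⟶ Y₂'),
      ((f₁ ⊗ₘ g₁) ⊗ₘ (f₂ ⊗ₘ g₂)) ≫ (φ X₁' Y₁' X₂' Y₂').hom
        = (φ X₁ Y₁ X₂ Y₂).hom ≫ ((f₁ ⊗ₘ f₂) ⊗ₘ (g₁ ⊗ₘ g₂)))
    -- the associativity (cocycle) constraint for `φ`: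
    (hcoc : ∀ X₁ Y₁ X₂ Y₂ X₃ Y₃ : C,
      ((φ X₁ Y₁ X₂ Y₂).hom ⊗ₘ 𝟙 (X₃ ⊗ Y₃)) ≫ (φ (X₁ ⊗ X₂) (Y₁ ⊗ Y₂) X₃ Y₃).hom
        = eqToHom (hassoc (X₁ ⊗ Y₁) (X₂ ⊗ Y₂) (X₃ ⊗ Y₃))
          ≫ (𝟙 (X₁ ⊗ Y₁) ⊗ₘ (φ X₂ Y₂ X₃ Y₃).hom)
          ≫ (φ X₁ Y₁ (X₂ ⊗ X₃) (Y₂ ⊗ Y₃)).hom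
          ≫ eqToHom (by simp only [hassoc]))
    -- the induced candidate braiding `B(φ)`:
    (B : ∀ X Y : C, X ⊗ Y ⟶ Y ⊗ X)
    (hB : ∀ X Y : C, B X Y
      = eqToHom (show X ⊗ Y = (𝟙_ C ⊗ X) ⊗ (Y ⊗ 𝟙_ C) by simp only [hul, hur])
        ≫ (φ (𝟙_ C) X Y (𝟙_ C)).hom
        ≫ eqToHom (show (𝟙_ C ⊗ Y) ⊗ (X ⊗ 𝟙_ C) = (Y ⊗ 𝟙_ C) ⊗ (𝟙_ C ⊗ X) by
            simp only [hul, hur])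
        ≫ (φ Y (𝟙_ C) (𝟙_ C) X).inv
        ≫ eqToHom (show (Y ⊗ 𝟙_ C) ⊗ (𝟙_ C ⊗ X) = Y ⊗ X by simp only [hul, hur])) :
    -- `B(φ)` is a braiding:
    (∀ X Y : C, IsIso (B X Y))
    ∧ (∀ {X Y X' Y' : C} (f : X ⟶ X') (g : Y ⟶ Y'),
        (f ⊗ₘ g) ≫ B X' Y' = B X Y ≫ (g ⊗ₘ f))
    ∧ (∀ X Y Z : C, B (X ⊗ Y) Z
        = eqToHom (hassoc X Y Z) ≫ (𝟙 X ⊗ₘ B Y Z) ≫ eqToHom (hassoc X Z Y).symm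
          ≫ (B X Z ⊗ₘ 𝟙 Y) ≫ eqToHom (hassoc Z X Y))
    ∧ (∀ X Y Z : C, B X (Y ⊗ Z)
        = eqToHom (hassoc X Y Z).symm ≫ (B X Y ⊗ₘ 𝟙 Z) ≫ eqToHom (hassoc Y X Z)
          ≫ (𝟙 Y ⊗ₘ B X Z) ≫ eqToHom (hassoc Y Z X).symm) := by
  obtain rfl : B = JoyalStreet.braiding hul hur φ := by
    funext X Y
    simp [hB, JoyalStreet.braiding, JoyalStreet.phiInner, JoyalStreet.phiOuter,
      JoyalStreet.phiAlong]
  simp only [id_tensorHom, tensorHom_id]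
  exact ⟨inferInstance, JoyalStreet.braiding_naturality hul hur @hnat hlu hru,
    JoyalStreet.braiding_tensor_left hul hur @hnat hlu hru hassoc hcoc,
    JoyalStreet.braiding_tensor_right hul hur @hnat hlu hru hassoc hcoc⟩
end

section
/- Let X be a cosimplicial abelian group with coface maps ∂ᵢ and codegeneracy maps sᵢ satisfying the cosimplicial identities. For n ≥ 1 and 0 ≤ i ≤ n−1 set πᵢⁿ = id − ∂ᵢⁿ⁻¹ ∘ sᵢⁿ : Xⁿ → Xⁿ. Then for all 0 ≤ j ≤ i ≤ n−1: (a) sⱼ ∘ π₀ⁿ ∘ π₁ⁿ ∘ ⋯ ∘ πᵢⁿ = 0, and (b) π₀ⁿ ∘ π₁ⁿ ∘ ⋯ ∘ πᵢⁿ ∘ ∂ⱼ = 0. -/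
/-- `piMap X d s n i` is the map `πᵢ = id − ∂ᵢ ∘ sᵢ : Xⁿ⁺¹ → Xⁿ⁺¹` of a cosimplicial
abelian group. -/
def piMap (X : ℕ → Type*) [∀ n, AddCommGroup (X n)]
    (d : ∀ n, ℕ → (X n →+ X (n + 1))) (s : ∀ n, ℕ → (X (n + 1) →+ X n))
    (n i : ℕ) : X (n + 1) →+ X (n + 1) :=
  AddMonoidHom.id (X (n + 1)) - (d n i).comp (s n i)

/-- `piProd X d s n i = π₀ ∘ π₁ ∘ ⋯ ∘ πᵢ : Xⁿ⁺¹ → Xⁿ⁺¹`. -/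
def piProd (X : ℕ → Type*) [∀ n, AddCommGroup (X n)]
    (d : ∀ n, ℕ → (X n →+ X (n + 1))) (s : ∀ n, ℕ → (X (n + 1) →+ X n))
    (n : ℕ) : ℕ → (X (n + 1) →+ X (n + 1))
  | 0 => piMap X d s n 0
  | i + 1 => (piProd X d s n i).comp (piMap X d s n (i + 1))

section aux
variable (X : ℕ → Type*) [∀ n, AddCommGroup (X n)]
    (d : ∀ n, ℕ → (X n →+ X (n + 1))) (s : ∀ n, ℕ → (X (n + 1) →+ X n))

-- sᵢ πᵢ = 0
lemma lemB (hsd_eq1 : ∀ n j, j ≤ n → (s n j).comp (d n j) = AddMonoidHom.id (X n))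
    (n j : ℕ) (hj : j ≤ n) : (s n j).comp (piMap X d s n j) = 0 := by
  ext x
  have h := DFunLike.congr_fun (hsd_eq1 n j hj) (s n j x)
  simp only [AddMonoidHom.comp_apply, AddMonoidHom.id_apply] at h
  simp [piMap, h]

-- πⱼ ∂ⱼ = 0
lemma lemD (hsd_eq1 : ∀ n j, j ≤ n → (s n j).comp (d n j) = AddMonoidHom.id (X n))
    (n j : ℕ) (hj : j ≤ n) : (piMap X d s n j).comp (d n j) = 0 := by
  ext x
  have h := DFunLike.congr_fun (hsd_eq1 n j hj) x
  simp only [AddMonoidHom.comp_apply, AddMonoidHom.id_apply] at h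
  simp [piMap, h]

-- s_{j+1} πₖ = πₖ s_{j+1}  for k ≤ j ≤ m  (levels m+1 → m)
lemma lemA
    (hss : ∀ n i j, i ≤ j → j ≤ n →
      (s n j).comp (s (n + 1) i) = (s n i).comp (s (n + 1) (j + 1)))
    (hsd_lt : ∀ n i j, i ≤ j → j ≤ n →
      (s (n + 1) (j + 1)).comp (d (n + 1) i) = (d n i).comp (s n j))
    (m k j : ℕ) (hkj : k ≤ j) (hjm : j ≤ m) :
    (s (m + 1) (j + 1)).comp (piMap X d s (m + 1) k)
      = (piMap X d s m k).comp (s (m + 1) (j + 1)) := by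
  ext x
  have h1 := DFunLike.congr_fun (hsd_lt m k j hkj hjm) (s (m + 1) k x)
  have h2 := DFunLike.congr_fun (hss m k j hkj hjm) x
  simp only [AddMonoidHom.comp_apply] at h1 h2
  simp [piMap, h1, h2]

-- π_{k+1} ∂ⱼ = ∂ⱼ πₖ  for j ≤ k ≤ m  (levels: d (m+1) j)
lemma lemC
    (hdd : ∀ n i j, i ≤ j → j ≤ n + 1 →
      (d (n + 1) (j + 1)).comp (d n i) = (d (n + 1) i).comp (d n j))
    (hsd_lt : ∀ n i j, i ≤ j → j ≤ n →
      (s (n + 1) (j + 1)).comp (d (n + 1) i) = (d n i).comp (s n j))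
    (m k j : ℕ) (hjk : j ≤ k) (hkm : k ≤ m) :
    (piMap X d s (m + 1) (k + 1)).comp (d (m + 1) j)
      = (d (m + 1) j).comp (piMap X d s m k) := by
  ext x
  have h1 := DFunLike.congr_fun (hsd_lt m j k hjk hkm) x
  have h2 := DFunLike.congr_fun (hdd m j k hjk (hkm.trans (Nat.le_succ m))) (s m k x)
  simp only [AddMonoidHom.comp_apply] at h1 h2
  simp [piMap, h1, h2]

-- s_{j+1} (π₀⋯πₖ) = (π₀⋯πₖ) s_{j+1} for k ≤ j ≤ m
lemma lemAprod
    (hss : ∀ n i j, i ≤ j → j ≤ n →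
      (s n j).comp (s (n + 1) i) = (s n i).comp (s (n + 1) (j + 1)))
    (hsd_lt : ∀ n i j, i ≤ j → j ≤ n →
      (s (n + 1) (j + 1)).comp (d (n + 1) i) = (d n i).comp (s n j))
    (m k j : ℕ) (hkj : k ≤ j) (hjm : j ≤ m) :
    (s (m + 1) (j + 1)).comp (piProd X d s (m + 1) k)
      = (piProd X d s m k).comp (s (m + 1) (j + 1)) := by
  induction k with
  | zero => exact lemA X d s hss hsd_lt m 0 j (Nat.zero_le j) hjm
  | succ k ih =>
    have h1 := ih (Nat.le_of_succ_le hkj)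
    have h2 := lemA X d s hss hsd_lt m (k + 1) j hkj hjm
    show (s (m + 1) (j + 1)).comp ((piProd X d s (m + 1) k).comp (piMap X d s (m + 1) (k + 1))) = _
    rw [← AddMonoidHom.comp_assoc, h1, AddMonoidHom.comp_assoc, h2,
      ← AddMonoidHom.comp_assoc]
    rfl
end aux

/-- In a cosimplicial abelian group, with `πᵢ = id − ∂ᵢsᵢ`, one has
`sⱼ ∘ π₀⋯πᵢ = 0` and `π₀⋯πᵢ ∘ ∂ⱼ = 0` for all `j ≤ i`.
Here `d n i : Xⁿ → Xⁿ⁺¹` is the coface `∂ᵢ` and `s n i : Xⁿ⁺¹ → Xⁿ` the codegeneracy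
`sᵢ`, subject to the cosimplicial identities. -/
theorem stmt_15 (X : ℕ → Type*) [∀ n, AddCommGroup (X n)]
    (d : ∀ n, ℕ → (X n →+ X (n + 1))) (s : ∀ n, ℕ → (X (n + 1) →+ X n))
    -- ∂ⱼ∂ᵢ = ∂ᵢ∂_{j−1} for i < j :
    (hdd : ∀ n i j, i ≤ j → j ≤ n + 1 →
      (d (n + 1) (j + 1)).comp (d n i) = (d (n + 1) i).comp (d n j))
    -- sⱼsᵢ = sᵢs_{j+1} for i ≤ j :
    (hss : ∀ n i j, i ≤ j → j ≤ n →
      (s n j).comp (s (n + 1) i) = (s n i).comp (s (n + 1) (j + 1)))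
    -- sⱼ∂ᵢ = ∂ᵢs_{j−1} for i < j :
    (hsd_lt : ∀ n i j, i ≤ j → j ≤ n →
      (s (n + 1) (j + 1)).comp (d (n + 1) i) = (d n i).comp (s n j))
    -- sⱼ∂ᵢ = id for i = j :
    (hsd_eq1 : ∀ n j, j ≤ n → (s n j).comp (d n j) = AddMonoidHom.id (X n))
    -- sⱼ∂ᵢ = id for i = j + 1 :
    (hsd_eq2 : ∀ n j, j ≤ n → (s n j).comp (d n (j + 1)) = AddMonoidHom.id (X n))
    -- sⱼ∂ᵢ = ∂_{i−1}sⱼ for i > j + 1 :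
    (hsd_gt : ∀ n i j, j ≤ i → i ≤ n →
      (s (n + 1) j).comp (d (n + 1) (i + 2)) = (d n (i + 1)).comp (s n j))
    (n i j : ℕ) (hji : j ≤ i) (hin : i ≤ n) :
    (s n j).comp (piProd X d s n i) = 0
    ∧ (piProd X d s n i).comp (d n j) = 0 := by
  induction i generalizing j with
  | zero =>
    interval_cases j
    exact ⟨lemB X d s hsd_eq1 n 0 (Nat.zero_le n),
      lemD X d s hsd_eq1 n 0 (Nat.zero_le n)⟩
  | succ i ih =>
    obtain ⟨m, rfl⟩ : ∃ m, n = m + 1 := ⟨n - 1, by omega⟩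
    have him : i ≤ m := by omega
    show (s (m + 1) j).comp ((piProd X d s (m + 1) i).comp (piMap X d s (m + 1) (i + 1))) = 0
      ∧ ((piProd X d s (m + 1) i).comp (piMap X d s (m + 1) (i + 1))).comp (d (m + 1) j) = 0
    rcases Nat.lt_or_ge j (i + 1) with hj | hj
    · have hji' : j ≤ i := by omega
      obtain ⟨ha, hb⟩ := ih j hji' (by omega)
      constructor
      · rw [← AddMonoidHom.comp_assoc, ha, AddMonoidHom.zero_comp]
      · rw [AddMonoidHom.comp_assoc,
          lemC X d s hdd hsd_lt m i j hji' him,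
          ← AddMonoidHom.comp_assoc, hb, AddMonoidHom.zero_comp]
    · have hj' : j = i + 1 := by omega
      subst hj'
      constructor
      · rw [← AddMonoidHom.comp_assoc,
          lemAprod X d s hss hsd_lt m i i le_rfl him,
          AddMonoidHom.comp_assoc,
          lemB X d s hsd_eq1 (m + 1) (i + 1) (by omega),
          AddMonoidHom.comp_zero]
      · rw [AddMonoidHom.comp_assoc,
          lemD X d s hsd_eq1 (m + 1) (i + 1) (by omega),
          AddMonoidHom.comp_zero]
end

section
/- Let X be a cosimplicial abelian group with cofaces ∂ᵢ and codegeneracies sᵢ, and let δⁿ = Σ_{i=0}^{n+1} (−1)ⁱ ∂ᵢⁿ : Xⁿ → Xⁿ⁺¹ be the alternating-sum differential. With πᵢⁿ = id − ∂ᵢⁿ⁻¹sᵢⁿ, for all 0 ≤ i ≤ n−1 one has δⁿ ∘ (π₀ⁿ ∘ ⋯ ∘ πᵢⁿ) = (π₀ⁿ⁺¹ ∘ ⋯ ∘ πᵢⁿ⁺¹) ∘ δⁿ. -/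
/-- The alternating-sum cochain differential `δⁿ = Σ_{i=0}^{n+1} (−1)ⁱ ∂ᵢ : Xⁿ → Xⁿ⁺¹`. -/
def deltaMap (X : ℕ → Type*) [∀ n, AddCommGroup (X n)]
    (d : ∀ n, ℕ → (X n →+ X (n + 1))) (n : ℕ) : X n →+ X (n + 1) :=
  ∑ i ∈ Finset.range (n + 2), ((-1 : ℤ) ^ i) • d n i

section Aux

variable {X : ℕ → Type*} [∀ n, AddCommGroup (X n)]
  (d : ∀ n, ℕ → (X n →+ X (n + 1))) (s : ∀ n, ℕ → (X (n + 1) →+ X n))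

private lemma comp_sum' {A B C : Type*} [AddCommGroup A] [AddCommGroup B] [AddCommGroup C]
    (f : B →+ C) (g : ℕ → (A →+ B)) (t : Finset ℕ) :
    f.comp (∑ i ∈ t, g i) = ∑ i ∈ t, f.comp (g i) := by
  ext x; simp [map_sum]

private lemma sum_comp' {A B C : Type*} [AddCommGroup A] [AddCommGroup B] [AddCommGroup C]
    (f : A →+ B) (g : ℕ → (B →+ C)) (t : Finset ℕ) :
    (∑ i ∈ t, g i).comp f = ∑ i ∈ t, (g i).comp f := by
  ext x; simp

private lemma comp_smul' {A B C : Type*} [AddCommGroup A] [AddCommGroup B] [AddCommGroup C]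
    (f : B →+ C) (g : A →+ B) (z : ℤ) : f.comp (z • g) = z • f.comp g := by
  ext x; simp

private lemma smul_comp' {A B C : Type*} [AddCommGroup A] [AddCommGroup B] [AddCommGroup C]
    (f : A →+ B) (g : B →+ C) (z : ℤ) : (z • g).comp f = z • g.comp f := by
  ext x; simp

/-- `π_{k+1} ∘ ∂ⱼ = ∂ⱼ ∘ πₖ` for `j ≤ k`. -/
private lemma piMap_comp_d
    (hdd : ∀ n i j, i ≤ j → j ≤ n + 1 →
      (d (n + 1) (j + 1)).comp (d n i) = (d (n + 1) i).comp (d n j))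
    (hsd_lt : ∀ n i j, i ≤ j → j ≤ n →
      (s (n + 1) (j + 1)).comp (d (n + 1) i) = (d n i).comp (s n j))
    (n j k : ℕ) (hjk : j ≤ k) (hkn : k ≤ n) :
    (piMap X d s (n + 1) (k + 1)).comp (d (n + 1) j)
      = (d (n + 1) j).comp (piMap X d s n k) := by
  unfold piMap
  rw [AddMonoidHom.sub_comp, AddMonoidHom.comp_sub, AddMonoidHom.id_comp,
    AddMonoidHom.comp_id, AddMonoidHom.comp_assoc, hsd_lt n j k hjk hkn,
    ← AddMonoidHom.comp_assoc, hdd n j k hjk (le_trans hkn (Nat.le_succ n)),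
    AddMonoidHom.comp_assoc]

/-- `πⱼ ∘ ∂ⱼ = 0`. -/
private lemma piMap_comp_d_self
    (hsd_eq1 : ∀ n j, j ≤ n → (s n j).comp (d n j) = AddMonoidHom.id (X n))
    (n j : ℕ) (h : j ≤ n) : (piMap X d s n j).comp (d n j) = 0 := by
  unfold piMap
  rw [AddMonoidHom.sub_comp, AddMonoidHom.id_comp, AddMonoidHom.comp_assoc,
    hsd_eq1 n j h, AddMonoidHom.comp_id, sub_self]

/-- `(π₀⋯πᵢ) ∘ ∂ⱼ = 0` for `j ≤ i`. -/
private lemma piProd_comp_d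
    (hdd : ∀ n i j, i ≤ j → j ≤ n + 1 →
      (d (n + 1) (j + 1)).comp (d n i) = (d (n + 1) i).comp (d n j))
    (hsd_lt : ∀ n i j, i ≤ j → j ≤ n →
      (s (n + 1) (j + 1)).comp (d (n + 1) i) = (d n i).comp (s n j))
    (hsd_eq1 : ∀ n j, j ≤ n → (s n j).comp (d n j) = AddMonoidHom.id (X n)) :
    ∀ i j n, j ≤ i → i ≤ n + 1 →
      (piProd X d s (n + 1) i).comp (d (n + 1) j) = 0 := by
  intro i
  induction i with
  | zero =>
    intro j n hj hn
    obtain rfl : j = 0 := Nat.le_zero.mp hj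
    exact piMap_comp_d_self d s hsd_eq1 (n + 1) 0 (Nat.zero_le _)
  | succ i ih =>
    intro j n hj hn
    have hi : i ≤ n := Nat.succ_le_succ_iff.mp hn
    show ((piProd X d s (n + 1) i).comp (piMap X d s (n + 1) (i + 1))).comp (d (n + 1) j) = 0
    rw [AddMonoidHom.comp_assoc]
    rcases Nat.lt_or_ge j (i + 1) with h | h
    · rw [piMap_comp_d d s hdd hsd_lt n j i (Nat.lt_succ_iff.mp h) hi,
        ← AddMonoidHom.comp_assoc, ih j n (Nat.lt_succ_iff.mp h) (le_trans hi (Nat.le_succ n)),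
        AddMonoidHom.zero_comp]
    · obtain rfl : j = i + 1 := le_antisymm hj h
      rw [piMap_comp_d_self d s hsd_eq1 (n + 1) (i + 1) (Nat.succ_le_succ hi),
        AddMonoidHom.comp_zero]

/-- Key computation: `δ ∘ πᵢ − πᵢ ∘ δ = Σ_{j<i} (−1)ʲ ∂ⱼ ∘ (∂_{i−1}s_{i−1} − ∂ᵢsᵢ)`. -/
private lemma delta_comp_piMap
    (hdd : ∀ n i j, i ≤ j → j ≤ n + 1 →
      (d (n + 1) (j + 1)).comp (d n i) = (d (n + 1) i).comp (d n j))
    (hsd_lt : ∀ n i j, i ≤ j → j ≤ n →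
      (s (n + 1) (j + 1)).comp (d (n + 1) i) = (d n i).comp (s n j))
    (hsd_eq1 : ∀ n j, j ≤ n → (s n j).comp (d n j) = AddMonoidHom.id (X n))
    (hsd_eq2 : ∀ n j, j ≤ n → (s n j).comp (d n (j + 1)) = AddMonoidHom.id (X n))
    (hsd_gt : ∀ n i j, j ≤ i → i ≤ n →
      (s (n + 1) j).comp (d (n + 1) (i + 2)) = (d n (i + 1)).comp (s n j))
    (n i : ℕ) (hin : i ≤ n) :
    (deltaMap X d (n + 1)).comp (piMap X d s n i)
        - (piMap X d s (n + 1) i).comp (deltaMap X d (n + 1))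
      = ∑ j ∈ Finset.range i, ((-1 : ℤ) ^ j) • (d (n + 1) j).comp
          ((d n (i - 1)).comp (s n (i - 1)) - (d n i).comp (s n i)) := by
  simp only [piMap]
  rw [AddMonoidHom.comp_sub, AddMonoidHom.sub_comp, AddMonoidHom.comp_id,
    AddMonoidHom.id_comp, sub_sub_sub_cancel_left]
  have hb : ((d (n + 1) i).comp (s (n + 1) i)).comp (deltaMap X d (n + 1))
      = ∑ j ∈ Finset.range (n + 3), ((-1 : ℤ) ^ j) •
          ((d (n + 1) i).comp (s (n + 1) i)).comp (d (n + 1) j) := by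
    show ((d (n + 1) i).comp (s (n + 1) i)).comp
        (∑ j ∈ Finset.range (n + 3), ((-1 : ℤ) ^ j) • d (n + 1) j) = _
    rw [comp_sum']
    exact Finset.sum_congr rfl fun j _ => comp_smul' _ _ _
  have ha : (deltaMap X d (n + 1)).comp ((d n i).comp (s n i))
      = ∑ j ∈ Finset.range (n + 3), ((-1 : ℤ) ^ j) •
          (d (n + 1) j).comp ((d n i).comp (s n i)) := by
    show (∑ j ∈ Finset.range (n + 3), ((-1 : ℤ) ^ j) • d (n + 1) j).comp
        ((d n i).comp (s n i)) = _
    rw [sum_comp']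
    exact Finset.sum_congr rfl fun j _ => smul_comp' _ _ _
  rw [hb, ha, ← Finset.sum_sub_distrib]
  have hterm : ∀ j, ((-1 : ℤ) ^ j) • ((d (n + 1) i).comp (s (n + 1) i)).comp (d (n + 1) j)
      - ((-1 : ℤ) ^ j) • (d (n + 1) j).comp ((d n i).comp (s n i))
      = ((-1 : ℤ) ^ j) • (((d (n + 1) i).comp (s (n + 1) i)).comp (d (n + 1) j)
        - (d (n + 1) j).comp ((d n i).comp (s n i))) := fun j => (smul_sub _ _ _).symm
  rw [Finset.sum_congr rfl fun j _ => hterm j]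
  set f : ℕ → (X (n + 1) →+ X (n + 2)) := fun j =>
    ((-1 : ℤ) ^ j) • (((d (n + 1) i).comp (s (n + 1) i)).comp (d (n + 1) j)
      - (d (n + 1) j).comp ((d n i).comp (s n i))) with hf
  -- split the range
  rw [Finset.range_eq_Ico, ← Finset.sum_Ico_consecutive f (Nat.zero_le i)
      (by omega : i ≤ n + 3),
    ← Finset.sum_Ico_consecutive f (by omega : i ≤ i + 2) (by omega : i + 2 ≤ n + 3)]
  -- the tail vanishes
  have htail : ∑ j ∈ Finset.Ico (i + 2) (n + 3), f j = 0 := by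
    apply Finset.sum_eq_zero
    intro j hj
    rw [Finset.mem_Ico] at hj
    obtain ⟨k, rfl⟩ : ∃ k, j = k + 2 := ⟨j - 2, by omega⟩
    have hik : i ≤ k := by omega
    have hkn : k ≤ n := by omega
    rw [hf]
    simp only
    rw [AddMonoidHom.comp_assoc, hsd_gt n k i hik hkn]
    simp only [← AddMonoidHom.comp_assoc]
    rw [hdd n i (k + 1) (by omega) (by omega), sub_self, smul_zero]
  -- the middle two terms cancel
  have hmid : ∑ j ∈ Finset.Ico i (i + 2), f j = 0 := by
    rw [show i + 2 = (i + 1) + 1 from rfl, Finset.sum_Ico_succ_top (by omega),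
      Finset.sum_Ico_succ_top (by omega), Finset.Ico_self, Finset.sum_empty, zero_add]
    have h1 : f i = ((-1 : ℤ) ^ i) •
        ((d (n + 1) i) - (d (n + 1) i).comp ((d n i).comp (s n i))) := by
      rw [hf]; simp only
      rw [AddMonoidHom.comp_assoc, hsd_eq1 (n + 1) i (by omega), AddMonoidHom.comp_id]
    have h2 : f (i + 1) = ((-1 : ℤ) ^ (i + 1)) •
        ((d (n + 1) i) - (d (n + 1) i).comp ((d n i).comp (s n i))) := by
      rw [hf]; simp only
      rw [AddMonoidHom.comp_assoc, hsd_eq2 (n + 1) i (by omega), AddMonoidHom.comp_id,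
        ← AddMonoidHom.comp_assoc (s n i) (d n i) (d (n+1) (i+1)),
        show (d (n + 1) (i + 1)).comp (d n i) = (d (n + 1) i).comp (d n i) from
          hdd n i i le_rfl (by omega),
        AddMonoidHom.comp_assoc]
    rw [h1, h2, pow_succ, mul_neg_one, neg_smul, add_neg_cancel]
  rw [htail, hmid, add_zero, add_zero, ← Finset.range_eq_Ico]
  -- the head
  apply Finset.sum_congr rfl
  intro j hj
  rw [Finset.mem_range] at hj
  obtain ⟨m, rfl⟩ : ∃ m, i = m + 1 := ⟨i - 1, by omega⟩
  have hjm : j ≤ m := by omega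
  have hmn : m ≤ n := by omega
  rw [hf]; simp only [Nat.add_sub_cancel]
  rw [AddMonoidHom.comp_assoc, hsd_lt n j m hjm hmn, AddMonoidHom.comp_sub]
  simp only [← AddMonoidHom.comp_assoc]
  rw [hdd n j m hjm (by omega)]

end Aux

/-- In a cosimplicial abelian group, `δ ∘ (π₀⋯πᵢ) = (π₀⋯πᵢ) ∘ δ` for all `0 ≤ i ≤ n−1`,
where `πᵢ = id − ∂ᵢsᵢ` and `δ` is the alternating-sum differential. -/
theorem stmt_16 (X : ℕ → Type*) [∀ n, AddCommGroup (X n)]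
    (d : ∀ n, ℕ → (X n →+ X (n + 1))) (s : ∀ n, ℕ → (X (n + 1) →+ X n))
    (hdd : ∀ n i j, i ≤ j → j ≤ n + 1 →
      (d (n + 1) (j + 1)).comp (d n i) = (d (n + 1) i).comp (d n j))
    (hss : ∀ n i j, i ≤ j → j ≤ n →
      (s n j).comp (s (n + 1) i) = (s n i).comp (s (n + 1) (j + 1)))
    (hsd_lt : ∀ n i j, i ≤ j → j ≤ n →
      (s (n + 1) (j + 1)).comp (d (n + 1) i) = (d n i).comp (s n j))
    (hsd_eq1 : ∀ n j, j ≤ n → (s n j).comp (d n j) = AddMonoidHom.id (X n))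
    (hsd_eq2 : ∀ n j, j ≤ n → (s n j).comp (d n (j + 1)) = AddMonoidHom.id (X n))
    (hsd_gt : ∀ n i j, j ≤ i → i ≤ n →
      (s (n + 1) j).comp (d (n + 1) (i + 2)) = (d n (i + 1)).comp (s n j))
    (n i : ℕ) (hin : i ≤ n) :
    (deltaMap X d (n + 1)).comp (piProd X d s n i)
      = (piProd X d s (n + 1) i).comp (deltaMap X d (n + 1)) := by
  induction i with
  | zero =>
    have h := delta_comp_piMap d s hdd hsd_lt hsd_eq1 hsd_eq2 hsd_gt n 0 (Nat.zero_le n)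
    simp only [Finset.range_zero, Finset.sum_empty] at h
    exact sub_eq_zero.mp h
  | succ i ih =>
    have hi : i ≤ n := Nat.le_of_succ_le hin
    have hE := delta_comp_piMap d s hdd hsd_lt hsd_eq1 hsd_eq2 hsd_gt n (i + 1) hin
    have hE' : (deltaMap X d (n + 1)).comp (piMap X d s n (i + 1))
        = (piMap X d s (n + 1) (i + 1)).comp (deltaMap X d (n + 1))
          + ∑ j ∈ Finset.range (i + 1), ((-1 : ℤ) ^ j) • (d (n + 1) j).comp
            ((d n (i + 1 - 1)).comp (s n (i + 1 - 1)) - (d n (i + 1)).comp (s n (i + 1))) :=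
      by rw [← hE]; abel
    show (deltaMap X d (n + 1)).comp ((piProd X d s n i).comp (piMap X d s n (i + 1)))
      = ((piProd X d s (n + 1) i).comp (piMap X d s (n + 1) (i + 1))).comp
          (deltaMap X d (n + 1))
    rw [← AddMonoidHom.comp_assoc, ih hi, AddMonoidHom.comp_assoc, hE',
      AddMonoidHom.comp_add, comp_sum']
    have hz : ∀ j ∈ Finset.range (i + 1),
        (piProd X d s (n + 1) i).comp (((-1 : ℤ) ^ j) • (d (n + 1) j).comp
          ((d n (i + 1 - 1)).comp (s n (i + 1 - 1)) - (d n (i + 1)).comp (s n (i + 1)))) = 0 := by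
      intro j hj
      rw [Finset.mem_range] at hj
      rw [comp_smul', ← AddMonoidHom.comp_assoc,
        piProd_comp_d d s hdd hsd_lt hsd_eq1 i j n (Nat.lt_succ_iff.mp hj) (by omega),
        AddMonoidHom.zero_comp, smul_zero]
    rw [Finset.sum_congr rfl hz, Finset.sum_const_zero, add_zero, ← AddMonoidHom.comp_assoc]
end
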